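/- Let 𝓔 = (T, Ω, Act) be an extended transition system, a an agent, π ∈ Π(T), i ∈ ℕ, ψ an effect, and A ⊆ B ⊆ Act. If there exists a set T_B ⊆ (2^B)^ω such that T_B = Cause(ψ, π′, i, B) for every trace π′ ∈ Π(T) that is a-indistinguishable from π up to time i, then there exists a set T_A ⊆ (2^A)^ω such that T_A = Cause(ψ, π′, i, A) for every trace π′ ∈ Π(T) that is a-indistinguishable from π up to time i. (Knowledge of the cause over a larger action set implies knowledge of the cause over any smaller action set.) -/

import Mathlib

/-- A transition system `T = (S, S₀, Δ, AP, Λ)`. -/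
structure TransSys (S AP : Type*) where
  init : Set S
  delta : S → Set S
  delta_nonempty : ∀ s, (delta s).Nonempty
  label : S → S → Set AP

namespace TransSys

variable {S AP : Type*}

/-- A path is an infinite sequence of states following the transition function. -/
def IsPath (T : TransSys S AP) (ρ : ℕ → S) : Prop :=
  ∀ i, ρ (i + 1) ∈ T.delta (ρ i)

/-- The trace of a path is the sequence of its edge labels. -/
def traceOf (T : TransSys S AP) (ρ : ℕ → S) : ℕ → Set AP :=
  fun i => T.label (ρ i) (ρ (i + 1))

/-- `Π(T)`: the traces of initial paths. -/
def Traces (T : TransSys S AP) : Set (ℕ → Set AP) :=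
  { π | ∃ ρ : ℕ → S, ρ 0 ∈ T.init ∧ T.IsPath ρ ∧ π = T.traceOf ρ }

end TransSys

variable {S AP AG : Type*}

/-- `π =_A π′` : agreement on `A` at every time point. -/
def agreeOn (A : Set AP) (π π' : ℕ → Set AP) : Prop :=
  ∀ i, π i ∩ A = π' i ∩ A

/-- `π|_A` : projection of a trace to `A`. -/
def restrictTo (A : Set AP) (π : ℕ → Set AP) : ℕ → Set AP :=
  fun i => π i ∩ A

/-- `π ⊕_A π′` : trace-wide symmetric difference restricted to `A`. -/
def symDiff (A : Set AP) (π π' : ℕ → Set AP) : Set (AP × ℕ) :=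
  { q | q.1 ∈ A ∧ q.1 ∈ (π q.2 \ π' q.2) ∪ (π' q.2 \ π q.2) }

/-- `π′ ≤^A_{base} π″` : `π′` is at least as similar to `base` as `π″`, over `A`. -/
def simLE (A : Set AP) (base π' π'' : ℕ → Set AP) : Prop :=
  symDiff A π' base ⊆ symDiff A π'' base

/-- An extended transition system `𝓔 = (T, Ω, Act)`. -/
structure ExtTransSys (S AP AG : Type*) extends TransSys S AP where
  obs : AG → Set AP
  actMap : AG → Set AP
  act_sub_obs : ∀ a, actMap a ⊆ obs a
  act_total : ∀ (s : S) (A : Set AP), A ⊆ (⋃ a, actMap a) →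
    ∃ s' ∈ delta s, label s s' ∩ (⋃ a, actMap a) = A

namespace ExtTransSys

/-- The set of all actions. -/
def Act (E : ExtTransSys S AP AG) : Set AP := ⋃ a, E.actMap a

/-- The temporal cause `Cause(ψ, π, i, A)` of effect `ψ` on trace `π` at time `i` over
actions `A`. -/
def Cause (E : ExtTransSys S AP AG) (ψ : (ℕ → Set AP) → ℕ → Prop)
    (π : ℕ → Set AP) (i : ℕ) (A : Set AP) : Set (ℕ → Set AP) :=
  { π' | (∀ j, π' j ⊆ A) ∧
      ∀ π'' ∈ E.toTransSys.Traces, simLE A π π'' π' → agreeOn (E.Act \ A) π π'' →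
        ψ π'' i }

/-- `π` and `π′` are `a`-indistinguishable up to time `i`. -/
def Indist (E : ExtTransSys S AP AG) (a : AG) (i : ℕ) (π π' : ℕ → Set AP) : Prop :=
  ∀ j ≤ i, π j ∩ E.obs a = π' j ∩ E.obs a

/-- Deterministic extended transition system: unique initial state and for every state and
action set exactly one matching successor. -/
def Deterministic (E : ExtTransSys S AP AG) : Prop :=
  (∃ s₀ : S, E.init = {s₀}) ∧
  ∀ (s : S) (A : Set AP), A ⊆ E.Act →
    ∃! s' : S, s' ∈ E.delta s ∧ E.label s s' ∩ E.Act = A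

end ExtTransSys

/-! The `A`-cause of a trace is the projection to `A` of its `B`-cause. Projecting a `B`-cause
gives an `A`-cause, because on `B \ A` any counterfactual trace considered over `A` must agree
with the actual one; conversely, an `A`-cause completed by the actual trace's values on `B \ A`
is a `B`-cause. So an agent who knows the `B`-cause knows the `A`-cause, namely its projection,
whichever indistinguishable trace is the actual one. -/

theorem mem_symDiff {A : Set AP} {x y : ℕ → Set AP} {q : AP × ℕ} :
    q ∈ symDiff A x y ↔ q.1 ∈ A ∧ ¬(q.1 ∈ x q.2 ↔ q.1 ∈ y q.2) := by
  simp only [symDiff, Set.mem_ofPred_eq, Set.mem_union, Set.mem_sdiff]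
  tauto

theorem agreeOn_iff {X : Set AP} {x y : ℕ → Set AP} :
    agreeOn X x y ↔ ∀ j, ∀ p ∈ X, (p ∈ x j ↔ p ∈ y j) := by
  simp only [agreeOn, Set.ext_iff, Set.mem_inter_iff]
  refine forall_congr' fun j => ⟨fun h p hp => by simpa [hp] using h p, fun h p => ?_⟩
  by_cases hp : p ∈ X <;> simp [hp, h p]

namespace ExtTransSys

variable (E : ExtTransSys S AP AG) (ψ : (ℕ → Set AP) → ℕ → Prop) (ρ : ℕ → Set AP) (i : ℕ)
  {A B : Set AP}

theorem restrictTo_mem_Cause (hAB : A ⊆ B) (hB : B ⊆ E.Act) {σ : ℕ → Set AP}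
    (hσ : σ ∈ E.Cause ψ ρ i B) : restrictTo A σ ∈ E.Cause ψ ρ i A := by
  refine ⟨fun j => Set.inter_subset_right, fun π'' hπ'' hsim hagree => ?_⟩
  rw [agreeOn_iff] at hagree
  refine hσ.2 π'' hπ'' (fun ⟨p, j⟩ hq => ?_) (agreeOn_iff.2 fun j p hp =>
    hagree j p ⟨hp.1, fun hpA => hp.2 (hAB hpA)⟩)
  rw [mem_symDiff] at hq ⊢
  by_cases hpA : p ∈ A
  · have hdiff := (mem_symDiff.1 (hsim (mem_symDiff.2 ⟨hpA, hq.2⟩))).2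
    simp only [restrictTo, Set.mem_inter_iff, hpA, and_true] at hdiff
    exact ⟨hq.1, hdiff⟩
  · exact absurd (hagree j p ⟨hB hq.1, hpA⟩).symm hq.2

theorem extend_mem_Cause (hAB : A ⊆ B) {τ : ℕ → Set AP} (hτ : τ ∈ E.Cause ψ ρ i A) :
    (fun j => τ j ∪ (ρ j ∩ (B \ A))) ∈ E.Cause ψ ρ i B := by
  have hτA := hτ.1
  refine ⟨fun j => Set.union_subset ((hτA j).trans hAB)
    (Set.inter_subset_right.trans Set.sdiff_subset), fun π'' hπ'' hsim hagree => ?_⟩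
  rw [agreeOn_iff] at hagree
  refine hτ.2 π'' hπ'' (fun ⟨p, j⟩ hq => ?_) (agreeOn_iff.2 fun j p hp => ?_)
  · rw [mem_symDiff] at hq ⊢
    have hdiff := (mem_symDiff.1 (hsim (mem_symDiff.2 ⟨hAB hq.1, hq.2⟩))).2
    simp only [Set.mem_union, Set.mem_inter_iff, Set.mem_sdiff, hq.1, not_true_eq_false,
      and_false, or_false] at hdiff
    exact ⟨hq.1, hdiff⟩
  · by_cases hpB : p ∈ B
    · by_contra hne
      have hdiff := (mem_symDiff.1
        (hsim ((mem_symDiff (q := (p, j))).2 ⟨hpB, fun h => hne h.symm⟩))).2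
      have hpτ : p ∉ τ j := fun h => hp.2 (hτA j h)
      simp [hpB, hp.2, hpτ] at hdiff
    · exact hagree j p ⟨hp.1, hpB⟩

theorem Cause_eq_image_restrictTo (hAB : A ⊆ B) (hB : B ⊆ E.Act) :
    E.Cause ψ ρ i A = restrictTo A '' E.Cause ψ ρ i B := by
  refine Set.Subset.antisymm (fun τ hτ => ⟨_, E.extend_mem_Cause ψ ρ i hAB hτ, ?_⟩) ?_
  · funext j
    simp only [restrictTo, Set.union_inter_distrib_right, Set.inter_assoc, Set.sdiff_inter_self,
      Set.inter_empty, Set.union_empty]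
    exact Set.inter_eq_left.2 (hτ.1 j)
  · rintro _ ⟨σ, hσ, rfl⟩
    exact E.restrictTo_mem_Cause ψ ρ i hAB hB hσ

end ExtTransSys

theorem knowledge_of_cause_mono_general
    (E : ExtTransSys S AP AG) (a : AG) (ψ : (ℕ → Set AP) → ℕ → Prop)
    (π : ℕ → Set AP) (i : ℕ)
    (A B : Set AP) (hAB : A ⊆ B) (hB : B ⊆ E.Act)
    (hKB : ∃ TB : Set (ℕ → Set AP), (∀ τ ∈ TB, ∀ j, τ j ⊆ B) ∧
      ∀ π' ∈ E.toTransSys.Traces, E.Indist a i π π' → TB = E.Cause ψ π' i B) :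
    ∃ TA : Set (ℕ → Set AP), (∀ τ ∈ TA, ∀ j, τ j ⊆ A) ∧
      ∀ π' ∈ E.toTransSys.Traces, E.Indist a i π π' → TA = E.Cause ψ π' i A := by
  obtain ⟨TB, -, hTB⟩ := hKB
  refine ⟨restrictTo A '' TB, ?_, fun π' hπ' hind => ?_⟩
  · rintro _ ⟨σ, -, rfl⟩ j
    exact Set.inter_subset_right
  · rw [hTB π' hπ' hind, E.Cause_eq_image_restrictTo ψ π' i hAB hB]

/-- knowledge of the cause over a larger action set `B` implies knowledge of the
cause over any smaller action set `A ⊆ B`. -/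
theorem knowledge_of_cause_mono [Finite S] [Finite AP] [Finite AG]
    (E : ExtTransSys S AP AG) (a : AG) (ψ : (ℕ → Set AP) → ℕ → Prop)
    (π : ℕ → Set AP) (hπ : π ∈ E.toTransSys.Traces) (i : ℕ)
    (A B : Set AP) (hAB : A ⊆ B) (hB : B ⊆ E.Act)
    (hKB : ∃ TB : Set (ℕ → Set AP), (∀ τ ∈ TB, ∀ j, τ j ⊆ B) ∧
      ∀ π' ∈ E.toTransSys.Traces, E.Indist a i π π' → TB = E.Cause ψ π' i B) :
    ∃ TA : Set (ℕ → Set AP), (∀ τ ∈ TA, ∀ j, τ j ⊆ A) ∧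
      ∀ π' ∈ E.toTransSys.Traces, E.Indist a i π π' → TA = E.Cause ψ π' i A :=
  knowledge_of_cause_mono_general E a ψ π i A B hAB hB hKB
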